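/- Strong superadditivity of the convex closure, f̂(ρ) ≥ f̂(ρ_I) + f̂(ρ_II) for every state ρ on the doubled space, implies subadditivity of the conjugate with respect to Kronecker sums: f*(X₁ ⊠ I + I ⊠ X₂) ≤ f*(X₁) + f*(X₂). -/

import Mathlib

open scoped Kronecker ComplexOrder

noncomputable section

variable {α β : Type*} [Fintype α] [DecidableEq α] [Fintype β] [DecidableEq β]

/-- A density operator: positive semidefinite with unit trace. -/
def IsState (ρ : Matrix α α ℂ) : Prop := ρ.PosSemidef ∧ ρ.trace = 1

/-- A unit vector. -/
def UnitVector (ψ : α → ℂ) : Prop := ∑ i, Complex.normSq (ψ i) = 1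

/-- Rank-one projector |ψ⟩⟨ψ|. -/
def proj (ψ : α → ℂ) : Matrix α α ℂ := Matrix.vecMulVec ψ (star ψ)

/-- Eigenvalues of a Hermitian matrix (junk value 0 otherwise). -/
def eigs (M : Matrix α α ℂ) : α → ℝ := if h : M.IsHermitian then h.eigenvalues else 0

/-- Von Neumann entropy S(ρ) = -Tr ρ log ρ (with 0 log 0 = 0). -/
def vnEntropy (ρ : Matrix α α ℂ) : ℝ := -∑ i, eigs ρ i * Real.log (eigs ρ i)

/-- Functional calculus for Hermitian matrices (junk value 0 otherwise). -/
def mfun (g : ℝ → ℝ) (M : Matrix α α ℂ) : Matrix α α ℂ :=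
  if h : M.IsHermitian then
    (h.eigenvectorUnitary : Matrix α α ℂ) * Matrix.diagonal (fun i => (g (h.eigenvalues i) : ℂ)) *
      star (h.eigenvectorUnitary : Matrix α α ℂ)
  else 0

/-- Matrix logarithm (spectral, with the convention log 0 = 0). -/
def mlog : Matrix α α ℂ → Matrix α α ℂ := mfun Real.log

/-- Matrix exponential (spectral). -/
def mexp : Matrix α α ℂ → Matrix α α ℂ := mfun Real.exp

/-- Matrix real power (spectral). -/
def mpow (p : ℝ) : Matrix α α ℂ → Matrix α α ℂ := mfun (fun x => x ^ p)

/-- Maximal eigenvalue of a Hermitian matrix. -/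
def lmax (M : Matrix α α ℂ) : ℝ := ⨆ i, eigs M i

/-- Schatten q-norm of a positive semidefinite matrix. -/
def schatten (q : ℝ) (M : Matrix α α ℂ) : ℝ := (∑ i, eigs M i ^ q) ^ (1/q)

/-- Partial trace over the first tensor factor. -/
def trA (ρ : Matrix (α × β) (α × β) ℂ) : Matrix β β ℂ := fun i j => ∑ k, ρ (k, i) (k, j)

/-- Partial trace over the second tensor factor. -/
def trB (ρ : Matrix (α × β) (α × β) ℂ) : Matrix α α ℂ := fun i j => ∑ k, ρ (i, k) (j, k)

/-- The conjugate (Legendre-type transform) f*(X) = sup over states ρ of (Tr[ρX] - f ρ). -/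
def conjF (f : Matrix α α ℂ → ℝ) (X : Matrix α α ℂ) : ℝ :=
  sSup {x | ∃ ρ, IsState ρ ∧ x = (ρ * X).trace.re - f ρ}

/-- The biconjugate / convex closure f̂(ρ) = sup over Hermitian X of (Tr[ρX] - f*(X)). -/
def cclF (f : Matrix α α ℂ → ℝ) (ρ : Matrix α α ℂ) : ℝ :=
  sSup {x | ∃ X : Matrix α α ℂ, X.IsHermitian ∧ x = (ρ * X).trace.re - conjF f X}

/-- Boundedness of a function on the state space. -/
def BoundedOnStates (f : Matrix α α ℂ → ℝ) : Prop := ∃ C, ∀ ρ, IsState ρ → |f ρ| ≤ C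

/-- Values of finite convex combinations Σ pᵢ f(ρᵢ) over ensembles realizing ρ. -/
def ensembleValues (f : Matrix α α ℂ → ℝ) (ρ : Matrix α α ℂ) : Set ℝ :=
  {x | ∃ (N : ℕ) (p : Fin N → ℝ) (σ : Fin N → Matrix α α ℂ),
      (∀ i, 0 ≤ p i) ∧ ∑ i, p i = 1 ∧ (∀ i, IsState (σ i)) ∧
      ∑ i, p i • σ i = ρ ∧ x = ∑ i, p i * f (σ i)}

/-- Entanglement of formation of a bipartite state on H_A ⊗ H_B. -/
def EoF (ρ : Matrix (α × β) (α × β) ℂ) : ℝ :=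
  sInf {x | ∃ (N : ℕ) (p : Fin N → ℝ) (ψ : Fin N → (α × β → ℂ)),
      (∀ i, 0 ≤ p i) ∧ ∑ i, p i = 1 ∧ (∀ i, UnitVector (ψ i)) ∧
      ∑ i, p i • proj (ψ i) = ρ ∧ x = ∑ i, p i * vnEntropy (trB (proj (ψ i)))}

/-- g(M) = max over unit ψ of (Tr[Ψ log M] - S(Tr_A Ψ)). -/
def gFun (M : Matrix (α × β) (α × β) ℂ) : ℝ :=
  sSup {x | ∃ ψ : α × β → ℂ, UnitVector ψ ∧
      x = (proj ψ * mlog M).trace.re - vnEntropy (trA (proj ψ))}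

end

section Helpers
open Matrix
variable {α β : Type*} [Fintype α] [DecidableEq α] [Fintype β] [DecidableEq β]

lemma IsState.diag_re_nonneg {ρ : Matrix α α ℂ} (h : IsState ρ) (i : α) :
    0 ≤ (ρ i i).re := by
  have := h.1.dotProduct_mulVec_nonneg (Pi.single i 1)
  rw [Complex.le_def] at this
  simpa [Matrix.mulVec_single, single_dotProduct, dotProduct, Pi.single_apply, apply_ite] using this.1

lemma IsState.diag_re_le_one {ρ : Matrix α α ℂ} (h : IsState ρ) (i : α) :
    (ρ i i).re ≤ 1 := by
  have htr : (∑ k, (ρ k k).re) = 1 := by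
    have := congrArg Complex.re h.2
    simpa [Matrix.trace, Matrix.diag, Complex.re_sum] using this
  calc (ρ i i).re ≤ ∑ k, (ρ k k).re :=
        Finset.single_le_sum (f := fun k => (ρ k k).re)
          (fun k _ => h.diag_re_nonneg k) (Finset.mem_univ i)
    _ = 1 := htr

lemma IsState.entry_abs_le_one {ρ : Matrix α α ℂ} (h : IsState ρ) (i j : α) :
    norm (ρ i j) ≤ 1 := by
  obtain ⟨B, hB⟩ : ∃ B : Matrix α α ℂ, ρ = Bᴴ * B := by
    open scoped MatrixOrder Matrix.Norms.L2Operator in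
    exact CStarAlgebra.nonneg_iff_eq_star_mul_self.mp h.1.nonneg
  have hentry : ∀ k l : α, ρ k l = ∑ m, starRingEnd ℂ (B m k) * B m l := by
    intro k l
    rw [hB]
    simp [Matrix.mul_apply, Matrix.conjTranspose_apply]
  have hdiag : ∀ k : α, (ρ k k).re = ∑ m, norm (B m k) ^ 2 := by
    intro k
    rw [hentry k k]
    rw [Complex.re_sum]
    congr 1; funext m
    rw [← Complex.normSq_eq_conj_mul_self, Complex.sq_norm]
    simp [Complex.normSq_apply]
  have habs : norm (ρ i j) ≤ ∑ m, norm (B m i) * norm (B m j) := by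
    rw [hentry i j]
    refine (norm_sum_le _ _).trans ?_
    refine Finset.sum_le_sum fun m _ => ?_
    rw [norm_mul]
    simp
  have hAMGM : ∀ m : α, norm (B m i) * norm (B m j)
      ≤ (norm (B m i) ^ 2 + norm (B m j) ^ 2) / 2 := by
    intro m
    nlinarith [sq_nonneg (norm (B m i) - norm (B m j))]
  calc norm (ρ i j) ≤ ∑ m, norm (B m i) * norm (B m j) := habs
    _ ≤ ∑ m, (norm (B m i) ^ 2 + norm (B m j) ^ 2) / 2 :=
        Finset.sum_le_sum fun m _ => hAMGM m
    _ = ((ρ i i).re + (ρ j j).re) / 2 := by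
        rw [hdiag, hdiag, ← Finset.sum_add_distrib, ← Finset.sum_div]
    _ ≤ 1 := by
        have := h.diag_re_le_one i
        have := h.diag_re_le_one j
        linarith

lemma IsState.trace_mul_re_le {ρ : Matrix α α ℂ} (h : IsState ρ) (X : Matrix α α ℂ) :
    (ρ * X).trace.re ≤ ∑ i, ∑ j, norm (X i j) := by
  have : (ρ * X).trace = ∑ i, ∑ j, ρ i j * X j i := by
    simp [Matrix.trace, Matrix.diag, Matrix.mul_apply]
  rw [this]
  calc (∑ i, ∑ j, ρ i j * X j i).re ≤ norm (∑ i, ∑ j, ρ i j * X j i) :=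
        Complex.re_le_norm _
    _ ≤ ∑ i, ∑ j, norm (ρ i j * X j i) := by
        refine (norm_sum_le _ _).trans (Finset.sum_le_sum fun i _ => ?_)
        exact norm_sum_le _ _
    _ ≤ ∑ i, ∑ j, norm (X j i) := by
        refine Finset.sum_le_sum fun i _ => Finset.sum_le_sum fun j _ => ?_
        rw [norm_mul]
        calc norm (ρ i j) * norm (X j i)
            ≤ 1 * norm (X j i) := by
              exact mul_le_mul_of_nonneg_right (h.entry_abs_le_one i j)
                (norm_nonneg _)
          _ = norm (X j i) := one_mul _
    _ = ∑ i, ∑ j, norm (X i j) := by rw [Finset.sum_comm]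

end Helpers

section Helpers2
open Matrix
variable {α β : Type*} [Fintype α] [DecidableEq α] [Fintype β] [DecidableEq β]

lemma sum3_rotate {γ δ ε : Type*} [Fintype γ] [Fintype δ] [Fintype ε] (f : γ → δ → ε → ℂ) :
    ∑ a, ∑ b, ∑ c, f a b c = ∑ c, ∑ b, ∑ a, f a b c := by
  calc ∑ a, ∑ b, ∑ c, f a b c
      = ∑ a, ∑ c, ∑ b, f a b c := Finset.sum_congr rfl fun a _ => Finset.sum_comm
    _ = ∑ c, ∑ a, ∑ b, f a b c := Finset.sum_comm
    _ = ∑ c, ∑ b, ∑ a, f a b c := Finset.sum_congr rfl fun c _ => Finset.sum_comm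

lemma sum3_rotate' {γ δ ε : Type*} [Fintype γ] [Fintype δ] [Fintype ε] (f : γ → δ → ε → ℂ) :
    ∑ a, ∑ b, ∑ c, f a b c = ∑ c, ∑ a, ∑ b, f a b c := by
  calc ∑ a, ∑ b, ∑ c, f a b c
      = ∑ a, ∑ c, ∑ b, f a b c := Finset.sum_congr rfl fun a _ => Finset.sum_comm
    _ = ∑ c, ∑ a, ∑ b, f a b c := Finset.sum_comm

lemma conjF_bddAbove {f : Matrix α α ℂ → ℝ} {C : ℝ} (hf : ∀ ρ, IsState ρ → |f ρ| ≤ C)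
    (X : Matrix α α ℂ) :
    BddAbove {x | ∃ ρ, IsState ρ ∧ x = (ρ * X).trace.re - f ρ} := by
  refine ⟨(∑ i, ∑ j, norm (X i j)) + C, ?_⟩
  rintro x ⟨ρ, hρ, rfl⟩
  have h1 := hρ.trace_mul_re_le X
  have h2 := abs_le.mp (hf ρ hρ)
  linarith [h2.1]

lemma le_conjF {f : Matrix α α ℂ → ℝ} {C : ℝ} (hf : ∀ ρ, IsState ρ → |f ρ| ≤ C)
    {ρ : Matrix α α ℂ} (hρ : IsState ρ) (X : Matrix α α ℂ) :
    (ρ * X).trace.re - f ρ ≤ conjF f X :=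
  le_csSup (conjF_bddAbove hf X) ⟨ρ, hρ, rfl⟩

lemma le_cclF {f : Matrix α α ℂ → ℝ} (hf : BoundedOnStates f)
    {σ : Matrix α α ℂ} (hσ : IsState σ) {X : Matrix α α ℂ} (hX : X.IsHermitian) :
    (σ * X).trace.re - conjF f X ≤ cclF f σ := by
  obtain ⟨C, hC⟩ := hf
  refine le_csSup ⟨C, ?_⟩ ⟨X, hX, rfl⟩
  rintro x ⟨Y, hY, rfl⟩
  have := le_conjF hC hσ Y
  have := (abs_le.mp (hC σ hσ)).2
  linarith

lemma cclF_le {f : Matrix α α ℂ → ℝ} {C : ℝ} (hf : ∀ ρ, IsState ρ → |f ρ| ≤ C)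
    {ρ : Matrix α α ℂ} (hρ : IsState ρ) :
    cclF f ρ ≤ f ρ := by
  refine csSup_le ⟨(ρ * 0).trace.re - conjF f 0, 0, Matrix.isHermitian_zero, rfl⟩ ?_
  rintro x ⟨Y, hY, rfl⟩
  have := le_conjF hf hρ Y
  linarith

lemma trB_isState {ρ : Matrix (α × β) (α × β) ℂ} (h : IsState ρ) : IsState (trB ρ) := by
  refine ⟨Matrix.PosSemidef.of_dotProduct_mulVec_nonneg ?_ ?_, ?_⟩
  · funext i j
    have herm : ∀ a b, ρ a b = star (ρ b a) := by
      intro a b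
      conv_lhs => rw [← h.1.1]
      exact (Matrix.conjTranspose_apply ρ b a)
    simp only [Matrix.conjTranspose_apply, trB, star_sum]
    exact Finset.sum_congr rfl fun k _ => by rw [herm (i,k) (j,k)]
  · intro x
    have key : star x ⬝ᵥ trB ρ *ᵥ x
        = ∑ l : β, star (fun p : α × β => if p.2 = l then x p.1 else 0) ⬝ᵥ
            ρ *ᵥ (fun p : α × β => if p.2 = l then x p.1 else 0) := by
      simp only [dotProduct, Matrix.mulVec, Pi.star_apply, Fintype.sum_prod_type, trB,
        apply_ite (star : ℂ → ℂ), star_zero, ite_mul, zero_mul, mul_ite, mul_zero, Finset.sum_ite_eq',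
        Finset.mem_univ, if_true, Finset.mul_sum, Finset.sum_mul]
      simp only [Finset.sum_ite_irrel, Finset.sum_const_zero, Finset.sum_ite_eq',
        Finset.mem_univ, if_true]
      exact sum3_rotate' (fun a b c => star (x a) * (ρ (a, c) (b, c) * x b))
    rw [key]
    exact Finset.sum_nonneg fun l _ => h.1.dotProduct_mulVec_nonneg _
  · have : (trB ρ).trace = ρ.trace := by
      simp only [Matrix.trace, Matrix.diag, trB, Fintype.sum_prod_type]
    rw [this, h.2]

lemma trA_isState {ρ : Matrix (α × β) (α × β) ℂ} (h : IsState ρ) : IsState (trA ρ) := by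
  refine ⟨Matrix.PosSemidef.of_dotProduct_mulVec_nonneg ?_ ?_, ?_⟩
  · funext i j
    have herm : ∀ a b, ρ a b = star (ρ b a) := by
      intro a b
      conv_lhs => rw [← h.1.1]
      exact (Matrix.conjTranspose_apply ρ b a)
    simp only [Matrix.conjTranspose_apply, trA, star_sum]
    exact Finset.sum_congr rfl fun k _ => by rw [herm (k,i) (k,j)]
  · intro x
    have key : star x ⬝ᵥ trA ρ *ᵥ x
        = ∑ l : α, star (fun p : α × β => if p.1 = l then x p.2 else 0) ⬝ᵥ
            ρ *ᵥ (fun p : α × β => if p.1 = l then x p.2 else 0) := by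
      simp only [dotProduct, Matrix.mulVec, Pi.star_apply, Fintype.sum_prod_type, trA,
        apply_ite (star : ℂ → ℂ), star_zero, ite_mul, zero_mul, mul_ite, mul_zero, Finset.sum_ite_eq',
        Finset.mem_univ, if_true, Finset.mul_sum, Finset.sum_mul]
      simp only [Finset.sum_ite_irrel, Finset.sum_const_zero, Finset.sum_ite_eq',
        Finset.mem_univ, if_true]
      exact sum3_rotate' (fun a b c => star (x a) * (ρ (c, a) (c, b) * x b))
    rw [key]
    exact Finset.sum_nonneg fun l _ => h.1.dotProduct_mulVec_nonneg _
  · have : (trA ρ).trace = ρ.trace := by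
      simp only [Matrix.trace, Matrix.diag, trA, Fintype.sum_prod_type]
      rw [Finset.sum_comm]
    rw [this, h.2]

lemma trace_kron_left (ρ : Matrix (α × β) (α × β) ℂ) (X : Matrix α α ℂ) :
    (ρ * (X ⊗ₖ (1 : Matrix β β ℂ))).trace = (trB ρ * X).trace := by
  simp only [Matrix.trace, Matrix.diag, Matrix.mul_apply, trB, Matrix.kroneckerMap_apply,
    Fintype.sum_prod_type, Matrix.one_apply, mul_ite, mul_one, mul_zero,
    Finset.sum_ite_irrel, Finset.sum_const_zero,
    Finset.sum_ite_eq', Finset.mem_univ, if_true, Finset.sum_mul]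
  exact Finset.sum_congr rfl fun a _ => Finset.sum_comm

lemma trace_kron_right (ρ : Matrix (α × β) (α × β) ℂ) (X : Matrix β β ℂ) :
    (ρ * ((1 : Matrix α α ℂ) ⊗ₖ X)).trace = (trA ρ * X).trace := by
  simp only [Matrix.trace, Matrix.diag, Matrix.mul_apply, trA, Matrix.kroneckerMap_apply,
    Fintype.sum_prod_type, Matrix.one_apply, ite_mul, one_mul, zero_mul, mul_ite, mul_zero,
    Finset.sum_ite_eq', Finset.mem_univ, if_true, Finset.sum_mul]
  simp only [Finset.sum_ite_irrel, Finset.sum_const_zero, Finset.sum_ite_eq',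
    Finset.mem_univ, if_true]
  exact (sum3_rotate' (fun a b c => ρ (c, a) (c, b) * X b a)).symm

lemma uniform_isState [Nonempty α] :
    IsState (((Fintype.card α : ℂ))⁻¹ • (1 : Matrix α α ℂ)) := by
  have hc : (0 : ℝ) < (Fintype.card α : ℝ) := by
    exact_mod_cast Fintype.card_pos
  constructor
  · have : ((Fintype.card α : ℂ))⁻¹ • (1 : Matrix α α ℂ)
        = Matrix.diagonal (fun _ => ((Fintype.card α : ℂ))⁻¹) := by
      funext i j
      by_cases hij : i = j <;>
        simp [Matrix.one_apply, Matrix.diagonal_apply, hij]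
    rw [this]
    refine Matrix.posSemidef_diagonal_iff.mpr fun i => ?_
    have h0 : (0:ℝ) ≤ ((Fintype.card α : ℝ))⁻¹ := inv_nonneg.mpr hc.le
    calc (0:ℂ) = ((0:ℝ):ℂ) := by norm_num
      _ ≤ ((((Fintype.card α : ℝ))⁻¹ : ℝ) : ℂ) := by rw [Complex.real_le_real]; exact h0
      _ = ((Fintype.card α : ℂ))⁻¹ := by push_cast; ring
  · rw [Matrix.trace_smul, Matrix.trace_one]
    rw [smul_eq_mul]
    rw [inv_mul_cancel₀]
    exact_mod_cast hc.ne'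

end Helpers2

/-- Strong superadditivity of the convex closure implies subadditivity of
the conjugate with respect to Kronecker sums:
f*(X₁ ⊠ I + I ⊠ X₂) ≤ f*(X₁) + f*(X₂). -/
theorem strong_superadd_implies_conj_subadd {n : ℕ} (hn : 0 < n)
    (f : Matrix (Fin n) (Fin n) ℂ → ℝ) (hf : BoundedOnStates f)
    (F : Matrix (Fin n × Fin n) (Fin n × Fin n) ℂ → ℝ) (hF : BoundedOnStates F)
    (hssa : ∀ ρ : Matrix (Fin n × Fin n) (Fin n × Fin n) ℂ, IsState ρ →
      cclF f (trB ρ) + cclF f (trA ρ) ≤ cclF F ρ) :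
    ∀ X₁ X₂ : Matrix (Fin n) (Fin n) ℂ, X₁.IsHermitian → X₂.IsHermitian →
      conjF F (X₁ ⊗ₖ (1 : Matrix (Fin n) (Fin n) ℂ) + (1 : Matrix (Fin n) (Fin n) ℂ) ⊗ₖ X₂)
        ≤ conjF f X₁ + conjF f X₂ := by
  intro X₁ X₂ hX₁ hX₂
  obtain ⟨CF, hCF⟩ := hF
  haveI : Nonempty (Fin n) := ⟨⟨0, hn⟩⟩
  set Y : Matrix (Fin n × Fin n) (Fin n × Fin n) ℂ :=
    X₁ ⊗ₖ (1 : Matrix (Fin n) (Fin n) ℂ) + (1 : Matrix (Fin n) (Fin n) ℂ) ⊗ₖ X₂ with hY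
  show sSup {x | ∃ ρ, IsState ρ ∧ x = (ρ * Y).trace.re - F ρ} ≤ conjF f X₁ + conjF f X₂
  refine csSup_le ⟨_, ((Fintype.card (Fin n × Fin n) : ℂ))⁻¹ • 1, uniform_isState, rfl⟩ ?_
  rintro x ⟨ρ, hρ, rfl⟩
  have hB := trB_isState hρ
  have hA := trA_isState hρ
  have h1 : ((ρ * Y).trace).re = ((trB ρ * X₁).trace).re + ((trA ρ * X₂).trace).re := by
    rw [hY, Matrix.mul_add, Matrix.trace_add, trace_kron_left, trace_kron_right, Complex.add_re]
  have h2 : cclF F ρ ≤ F ρ := cclF_le hCF hρ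
  have h3 := hssa ρ hρ
  have h4 := le_cclF hf hB hX₁
  have h5 := le_cclF hf hA hX₂
  rw [h1]
  linarith
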